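/- arXiv:cond-mat/0505498 — 2 statements merged into one kernel-verified Lean document; each statement's English description precedes it below -/
import Mathlib

section
/- Let c > 0 and let f : [0,∞) → ℝ be continuous with f(t) ≥ c for all t ≥ 0. Suppose R : [0,∞) → (0,∞) is twice continuously differentiable and satisfies R''(t) = f(t)/R(t)³ for all t ≥ 0. Then R(t) → ∞ as t → ∞. -/
open Set Filter

/-- **Unbounded growth of the width.** Let `c > 0` and let `f` be continuous on
`[0,∞)` with `f(t) ≥ c` for all `t ≥ 0`. If `R : [0,∞) → (0,∞)` is twice
continuously differentiable (with derivative `R'` and second derivative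
`R''(t) = f(t)/R(t)³`), then `R(t) → ∞` as `t → ∞`. -/
theorem width_tendsto_atTop (c : ℝ) (hc : 0 < c) (f : ℝ → ℝ)
    (hf : ContinuousOn f (Ici 0)) (hfc : ∀ t ≥ (0 : ℝ), c ≤ f t)
    (R R' : ℝ → ℝ) (hRpos : ∀ t ≥ (0 : ℝ), 0 < R t)
    (hR' : ∀ t ≥ (0 : ℝ), HasDerivAt R (R' t) t)
    (hR'' : ∀ t ≥ (0 : ℝ), HasDerivAt R' (f t / R t ^ 3) t) :
    Tendsto R atTop atTop := by
  have hRcont : ContinuousOn R (Ici 0) := fun t ht =>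
    ((hR' t ht).continuousAt).continuousWithinAt
  have hR'cont : ContinuousOn R' (Ici 0) := fun t ht =>
    ((hR'' t ht).continuousAt).continuousWithinAt
  have hderivR : ∀ t ≥ (0:ℝ), deriv R t = R' t := fun t ht => (hR' t ht).deriv
  have hderivR' : ∀ t ≥ (0:ℝ), deriv R' t = f t / R t ^ 3 := fun t ht => (hR'' t ht).deriv
  have hRdiff : DifferentiableOn ℝ R (interior (Ici (0:ℝ))) := by
    rw [interior_Ici]
    exact fun t ht => ((hR' t (le_of_lt ht)).differentiableAt).differentiableWithinAt
  have hR'diff : DifferentiableOn ℝ R' (interior (Ici (0:ℝ))) := by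
    rw [interior_Ici]
    exact fun t ht => ((hR'' t (le_of_lt ht)).differentiableAt).differentiableWithinAt
  -- Step 1: there is some `t₀ ≥ 0` with `R' t₀ > 0`.
  have key : ∃ t₀ ≥ (0:ℝ), 0 < R' t₀ := by
    by_contra h
    push_neg at h
    -- R is nonincreasing, hence bounded by R 0
    have hanti : AntitoneOn R (Ici 0) :=
      antitoneOn_of_deriv_nonpos (convex_Ici 0) hRcont hRdiff (by
        rw [interior_Ici]
        intro x hx
        rw [hderivR x (le_of_lt hx)]
        exact h x (le_of_lt hx))
    have hRle : ∀ t ≥ (0:ℝ), R t ≤ R 0 := fun t ht => hanti self_mem_Ici ht ht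
    set δ := c / R 0 ^ 3 with hδdef
    have hR0 : 0 < R 0 := hRpos 0 le_rfl
    have hδpos : 0 < δ := div_pos hc (pow_pos hR0 3)
    have hgrow : ∀ x ∈ interior (Ici (0:ℝ)), δ ≤ deriv R' x := by
      rw [interior_Ici]
      intro x hx
      have hx' : (0:ℝ) ≤ x := le_of_lt hx
      rw [hderivR' x hx']
      exact div_le_div₀ (le_trans hc.le (hfc x hx')) (hfc x hx')
        (pow_pos (hRpos x hx') 3) (pow_le_pow_left₀ (hRpos x hx').le (hRle x hx') 3)
    set t : ℝ := (1 - R' 0) / δ with htdef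
    have hR'0 : R' 0 ≤ 0 := h 0 le_rfl
    have htpos : 0 < t := div_pos (by linarith) hδpos
    have := (convex_Ici 0).mul_sub_le_image_sub_of_le_deriv hR'cont hR'diff hgrow
      0 self_mem_Ici t (le_of_lt htpos) htpos.le
    rw [sub_zero, htdef, mul_div_cancel₀ _ (ne_of_gt hδpos)] at this
    have : 0 < R' t := by linarith
    exact absurd this (not_lt.2 (h t htpos.le))
  obtain ⟨t₀, ht₀, hδ⟩ := key
  set δ := R' t₀ with hδdef
  have hsub : Ici t₀ ⊆ Ici (0:ℝ) := Ici_subset_Ici.2 ht₀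
  have hsub' : interior (Ici t₀) ⊆ Ici (0:ℝ) := by
    rw [interior_Ici]; exact fun x hx => le_trans ht₀ (le_of_lt hx)
  -- R' ≥ δ on [t₀, ∞)
  have hR'mono : MonotoneOn R' (Ici t₀) :=
    monotoneOn_of_deriv_nonneg (convex_Ici t₀) (hR'cont.mono hsub)
      (fun x hx => ((hR'' x (hsub' hx)).differentiableAt).differentiableWithinAt)
      (by
        intro x hx
        rw [hderivR' x (hsub' hx)]
        exact le_of_lt (div_pos (lt_of_lt_of_le hc (hfc x (hsub' hx)))
          (pow_pos (hRpos x (hsub' hx)) 3)))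
  have hR'ge : ∀ x ∈ interior (Ici t₀), δ ≤ deriv R x := by
    intro x hx
    rw [hderivR x (hsub' hx)]
    exact hR'mono self_mem_Ici (interior_subset hx) (le_of_lt (by rwa [interior_Ici] at hx))
  have hlin := (convex_Ici t₀).mul_sub_le_image_sub_of_le_deriv (hRcont.mono hsub)
    (fun x hx => ((hR' x (hsub' hx)).differentiableAt).differentiableWithinAt) hR'ge
  have hbound : ∀ t ≥ t₀, δ * (t - t₀) + R t₀ ≤ R t := by
    intro t ht
    have := hlin t₀ self_mem_Ici t ht ht
    linarith
  have hg : Tendsto (fun t => δ * (t - t₀) + R t₀) atTop atTop := by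
    apply tendsto_atTop_add_const_right
    exact (tendsto_atTop_add_const_right atTop (-t₀) tendsto_id).const_mul_atTop hδ
  exact tendsto_atTop_mono' atTop (eventually_atTop.2 ⟨t₀, hbound⟩) hg
end

section
/- Let c > 0 and let f : [0,∞) → ℝ be continuous with f(t) ≤ −c for all t ≥ 0. Then there is no twice continuously differentiable function R : [0,∞) → (0,∞) with R'(0) ≤ 0 satisfying R''(t) = f(t)/R(t)³ for all t ≥ 0; more precisely, any positive C² solution with R(0) = R₀ > 0 and R'(0) ≤ 0 satisfies R(t) ≤ R₀ − c t²/(2R₀³) for as long as it remains positive, hence reaches 0 by time t₀ = √(2R₀⁴/c) (blowup in finite time). -/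
open Set Filter

/-!
Since `f ≤ -c < 0`, the solution is concave with `R'(0) ≤ 0`, so `R` decreases and stays
below `R₀`. Hence `R'' = f / R³ ≤ -c / R₀³`, and integrating this bound twice from `t = 0`
gives `R(t) ≤ R₀ - c t² / (2R₀³)`, which vanishes at `t₀ = √(2R₀⁴/c)`.
-/

theorem le_of_hasDerivAt_le_of_le {a b : ℝ} {u v u' v' : ℝ → ℝ}
    (hu : ∀ t ∈ Icc a b, HasDerivAt u (u' t) t) (hv : ∀ t ∈ Icc a b, HasDerivAt v (v' t) t)
    (hderiv : ∀ t ∈ Ico a b, u' t ≤ v' t) (ha : u a ≤ v a) :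
    ∀ t ∈ Icc a b, u t ≤ v t :=
  image_le_of_deriv_right_le_deriv_boundary
    (fun t ht ↦ (hu t ht).continuousAt.continuousWithinAt)
    (fun t ht ↦ (hu t (Ico_subset_Icc_self ht)).hasDerivWithinAt) ha
    (fun t ht ↦ (hv t ht).continuousAt.continuousWithinAt)
    (fun t ht ↦ (hv t (Ico_subset_Icc_self ht)).hasDerivWithinAt) hderiv

theorem le_apply_left_of_hasDerivAt_nonpos {a b : ℝ} {u u' : ℝ → ℝ}
    (hu : ∀ t ∈ Icc a b, HasDerivAt u (u' t) t) (hderiv : ∀ t ∈ Ico a b, u' t ≤ 0) :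
    ∀ t ∈ Icc a b, u t ≤ u a :=
  le_of_hasDerivAt_le_of_le hu (fun t _ ↦ hasDerivAt_const t (u a)) hderiv le_rfl

section WidthEquation

variable {c T : ℝ} {f R R' : ℝ → ℝ}
  (hpos : ∀ t ∈ Icc 0 T, 0 < R t) (hR : ∀ t ∈ Icc 0 T, HasDerivAt R (R' t) t)
  (hR' : ∀ t ∈ Icc 0 T, HasDerivAt R' (f t / R t ^ 3) t) (hR'0 : R' 0 ≤ 0)
include hpos hR hR' hR'0

theorem width_le_initial (hf : ∀ t ∈ Icc 0 T, f t ≤ 0) : ∀ t ∈ Icc 0 T, R t ≤ R 0 := by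
  have hR'_le : ∀ t ∈ Icc 0 T, R' t ≤ R' 0 :=
    le_apply_left_of_hasDerivAt_nonpos hR' fun t ht ↦
      div_nonpos_of_nonpos_of_nonneg (hf t (Ico_subset_Icc_self ht))
        (pow_pos (hpos t (Ico_subset_Icc_self ht)) 3).le
  exact le_apply_left_of_hasDerivAt_nonpos hR fun t ht ↦
    (hR'_le t (Ico_subset_Icc_self ht)).trans hR'0

theorem width_le_initial_sub_sq (hc : 0 ≤ c) (hfc : ∀ t ∈ Icc 0 T, f t ≤ -c) :
    ∀ t ∈ Icc 0 T, R t ≤ R 0 - c * t ^ 2 / (2 * R 0 ^ 3) := by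
  have hR_le := width_le_initial hpos hR hR' hR'0 fun t ht ↦ (hfc t ht).trans (neg_nonpos.2 hc)
  have hR''_le : ∀ t ∈ Icc 0 T, f t / R t ^ 3 ≤ -c / R 0 ^ 3 := fun t ht ↦ calc
    f t / R t ^ 3 ≤ -c / R t ^ 3 :=
      div_le_div_of_nonneg_right (hfc t ht) (pow_pos (hpos t ht) 3).le
    _ ≤ -c / R 0 ^ 3 := by
      have := hpos t ht
      rw [neg_div, neg_div, neg_le_neg_iff]
      gcongr
      exact hR_le t ht
  have hR'_le : ∀ t ∈ Icc 0 T, R' t ≤ -c * t / R 0 ^ 3 := by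
    refine le_of_hasDerivAt_le_of_le hR' (v' := fun _ ↦ -c / R 0 ^ 3) (fun t _ ↦ ?_)
      (fun t ht ↦ hR''_le t (Ico_subset_Icc_self ht)) (by simpa using hR'0)
    simpa using ((hasDerivAt_id t).const_mul (-c)).div_const (R 0 ^ 3)
  refine le_of_hasDerivAt_le_of_le hR (v' := fun t ↦ -c * t / R 0 ^ 3) (fun t _ ↦ ?_)
    (fun t ht ↦ hR'_le t (Ico_subset_Icc_self ht)) (by simp)
  have hsq := ((hasDerivAt_pow 2 t).const_mul c).div_const (2 * R 0 ^ 3)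
  exact (hsq.const_sub (R 0)).congr_deriv (by ring)

end WidthEquation

theorem width_blowup_general (c : ℝ) (hc : 0 < c) (f : ℝ → ℝ)
    (hfc : ∀ t ≥ (0 : ℝ), f t ≤ -c)
    (R R' : ℝ → ℝ) (R₀ : ℝ) (hR₀ : 0 < R₀) (hR0 : R 0 = R₀) (hR'0 : R' 0 ≤ 0) :
    (∀ T ≥ (0 : ℝ),
      (∀ t ∈ Icc 0 T, 0 < R t) →
      (∀ t ∈ Icc 0 T, HasDerivAt R (R' t) t) →
      (∀ t ∈ Icc 0 T, HasDerivAt R' (f t / R t ^ 3) t) →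
      ∀ t ∈ Icc 0 T, R t ≤ R₀ - c * t ^ 2 / (2 * R₀ ^ 3)) ∧
    ¬ ((∀ t ≥ (0 : ℝ), 0 < R t) ∧ (∀ t ≥ (0 : ℝ), HasDerivAt R (R' t) t) ∧
        (∀ t ≥ (0 : ℝ), HasDerivAt R' (f t / R t ^ 3) t)) := by
  subst hR0
  have bound : ∀ T ≥ (0 : ℝ), (∀ t ∈ Icc 0 T, 0 < R t) →
      (∀ t ∈ Icc 0 T, HasDerivAt R (R' t) t) →
      (∀ t ∈ Icc 0 T, HasDerivAt R' (f t / R t ^ 3) t) →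
      ∀ t ∈ Icc 0 T, R t ≤ R 0 - c * t ^ 2 / (2 * R 0 ^ 3) :=
    fun T _ hpos hR hR' ↦
      width_le_initial_sub_sq hpos hR hR' hR'0 hc.le fun t ht ↦ hfc t ht.1
  refine ⟨bound, fun ⟨hpos, hR, hR'⟩ ↦ ?_⟩
  set t₀ := √(2 * R 0 ^ 4 / c)
  have ht₀ : 0 ≤ t₀ := Real.sqrt_nonneg _
  have hbound_t₀ : R 0 - c * t₀ ^ 2 / (2 * R 0 ^ 3) = 0 := by
    rw [Real.sq_sqrt (by positivity)]
    field_simp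
    ring
  have hR_t₀ := bound t₀ ht₀ (fun t ht ↦ hpos t ht.1) (fun t ht ↦ hR t ht.1)
    (fun t ht ↦ hR' t ht.1) t₀ (right_mem_Icc.2 ht₀)
  linarith [hpos t₀ ht₀]

/-- **Finite-time blowup of the width.** Let `c > 0` and let `f` be continuous on
`[0,∞)` with `f(t) ≤ −c` for all `t ≥ 0`. Consider `R'' = f/R³` with
`R(0) = R₀ > 0` and `R'(0) ≤ 0`. Then: (a) on any interval `[0,T]` on which a
positive `C²` solution exists one has `R(t) ≤ R₀ − c t²/(2R₀³)` (so `R` reaches `0`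
by time `t₀ = √(2R₀⁴/c)`); and (b) there is no positive `C²` solution on all of
`[0,∞)`. -/
theorem width_blowup (c : ℝ) (hc : 0 < c) (f : ℝ → ℝ)
    (hf : ContinuousOn f (Ici 0)) (hfc : ∀ t ≥ (0 : ℝ), f t ≤ -c)
    (R R' : ℝ → ℝ) (R₀ : ℝ) (hR₀ : 0 < R₀) (hR0 : R 0 = R₀) (hR'0 : R' 0 ≤ 0) :
    (∀ T ≥ (0 : ℝ),
      (∀ t ∈ Icc 0 T, 0 < R t) →
      (∀ t ∈ Icc 0 T, HasDerivAt R (R' t) t) →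
      (∀ t ∈ Icc 0 T, HasDerivAt R' (f t / R t ^ 3) t) →
      ∀ t ∈ Icc 0 T, R t ≤ R₀ - c * t ^ 2 / (2 * R₀ ^ 3)) ∧
    ¬ ((∀ t ≥ (0 : ℝ), 0 < R t) ∧ (∀ t ≥ (0 : ℝ), HasDerivAt R (R' t) t) ∧
        (∀ t ≥ (0 : ℝ), HasDerivAt R' (f t / R t ^ 3) t)) :=
  width_blowup_general c hc f hfc R R' R₀ hR₀ hR0 hR'0
end
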